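/- arXiv:1709.03449 — 2 statements merged into one kernel-verified Lean document; each statement's English description precedes it below -/
import Mathlib

section
/- Let N ≥ 2, z ∈ ℤ with gcd(z, N) = 1, θ ∈ ℤ, and let z' ∈ ℤ satisfy z z' ≡ 1 (mod N). Then (1/N) ∑_{k=1}^{N−1} B₁({zk/N}) exp(2πi θ k/N) equals 0 if θ ≡ 0 (mod N), and equals (−i/(2N)) cot(π z' θ/N) otherwise. -/
/-!
Write `B(a) = a.val / N - 1/2` for `a : ZMod N` and `ψ` for the standard additive character
`a ↦ exp (2πi a / N)`; the summand is `B(z k) ψ(θ k)`, and the missing `k = 0` term is `-1/2`.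
As `z` is a unit mod `N` with inverse `z'`, substituting `a = z k` turns the full sum into
`∑ₐ B(a) ψ(θ z' a) = ∑_{j<N} (j/N - 1/2) c^j` with `c = ψ(θ z')` an `N`-th root of unity.
For `c ≠ 1` the weighted geometric sum `∑_{j<N} j c^j = N / (c - 1)` makes this `1 / (c - 1)`,
and `1 / (c - 1) + 1/2 = -(i/2) cot x` when `c = exp (2ix)`.
-/

open Real Finset

theorem mul_sub_one_sum_range_natCast_mul_pow {R : Type*} [CommRing R] (x : R) (n : ℕ) :
    (x - 1) * ∑ j ∈ range n, (j : R) * x ^ j = n * x ^ n - ∑ j ∈ range n, x ^ (j + 1) := by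
  induction n with
  | zero => simp
  | succ n ih =>
    rw [sum_range_succ, sum_range_succ, mul_add, ih]
    push_cast
    ring

theorem sum_range_natCast_mul_pow_of_pow_eq_one {K : Type*} [Field K] {c : K} {n : ℕ}
    (hcn : c ^ n = 1) (hc : c ≠ 1) :
    ∑ j ∈ range n, (j : K) * c ^ j = n / (c - 1) := by
  have hc' : c - 1 ≠ 0 := sub_ne_zero.2 hc
  have hgeom : ∑ j ∈ range n, c ^ (j + 1) = 0 := by
    simp_rw [pow_succ, ← sum_mul, geom_sum_eq hc, hcn, sub_self, zero_div, zero_mul]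
  rw [eq_div_iff hc', mul_comm, mul_sub_one_sum_range_natCast_mul_pow, hcn, hgeom, mul_one,
    sub_zero]

theorem sum_range_div_sub_half_mul_pow {K : Type*} [Field K] [CharZero K] [DecidableEq K]
    {c : K} {N : ℕ} (hN : N ≠ 0) (hcN : c ^ N = 1) :
    ∑ j ∈ range N, ((j : K) / N - 1 / 2) * c ^ j = if c = 1 then -1 / 2 else 1 / (c - 1) := by
  have hN' : (N : K) ≠ 0 := Nat.cast_ne_zero.2 hN
  simp_rw [sub_mul, sum_sub_distrib, div_mul_eq_mul_div, ← sum_div, ← mul_sum]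
  split_ifs with hc
  · have hgauss : ∑ j ∈ range N, (j : K) = N * (N - 1) / 2 := by
      have h := congrArg (Nat.cast : ℕ → K) (sum_range_id_mul_two N)
      push_cast [Nat.cast_sub (Nat.one_le_iff_ne_zero.2 hN)] at h
      linear_combination h / 2
    simp only [hc, one_pow, mul_one, sum_const, card_range, nsmul_eq_mul, hgauss]
    field_simp
    ring
  · rw [sum_range_natCast_mul_pow_of_pow_eq_one hcN hc, geom_sum_eq hc, hcN]
    field_simp
    ring

namespace ZMod

variable {N : ℕ}

/-- `B₁({a / N})`, read off the representative `a.val ∈ [0, N)`. -/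
noncomputable def periodicBernoulliOne (a : ZMod N) : ℂ := (a.val : ℂ) / N - 1 / 2

theorem periodicBernoulliOne_zero : periodicBernoulliOne (0 : ZMod N) = -1 / 2 := by
  simp [periodicBernoulliOne, neg_div]

variable [NeZero N]

theorem ofReal_fract_sub_half (a : ℤ) :
    ((Int.fract ((a : ℝ) / N) - 1 / 2 : ℝ) : ℂ) = periodicBernoulliOne (a : ZMod N) := by
  rw [periodicBernoulliOne, Int.fract_div_intCast_eq_div_intCast_mod, ← ZMod.val_intCast]
  push_cast
  rfl

theorem sum_univ_val {M : Type*} [AddCommMonoid M] (f : ℕ → M) :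
    ∑ a : ZMod N, f a.val = ∑ j ∈ range N, f j := by
  obtain ⟨n, rfl⟩ := Nat.exists_eq_succ_of_ne_zero (NeZero.ne N)
  exact Fin.sum_univ_eq_sum_range f (n + 1)

theorem sum_Icc_one_natCast {M : Type*} [AddCommGroup M] (F : ZMod N → M) :
    ∑ k ∈ Icc 1 (N - 1), F k = ∑ a, F a - F 0 := by
  have hrange : range N = insert 0 (Icc 1 (N - 1)) := by
    have := NeZero.ne N
    ext j
    simp only [mem_range, mem_insert, mem_Icc]
    omega
  have hval : ∑ a, F a = ∑ j ∈ range N, F j := by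
    simpa only [natCast_zmod_val] using sum_univ_val (N := N) (fun j ↦ F j)
  rw [hval, hrange, sum_insert (by simp), Nat.cast_zero, add_sub_cancel_left]

theorem sum_periodicBernoulliOne_mul_stdAddChar (b : ZMod N) :
    ∑ a, periodicBernoulliOne a * stdAddChar (b * a) =
      if b = 0 then -1 / 2 else 1 / (stdAddChar b - 1) := by
  have hpow : ∀ a : ZMod N, stdAddChar (b * a) = stdAddChar b ^ a.val := fun a ↦ by
    rw [← AddChar.map_nsmul_eq_pow, nsmul_eq_mul, natCast_zmod_val, mul_comm]
  have hN : stdAddChar b ^ N = 1 := by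
    rw [← AddChar.map_nsmul_eq_pow, nsmul_eq_mul, natCast_self, zero_mul, AddChar.map_zero_eq_one]
  simp_rw [hpow, periodicBernoulliOne]
  rw [sum_univ_val (fun j ↦ ((j : ℂ) / N - 1 / 2) * stdAddChar b ^ j),
    sum_range_div_sub_half_mul_pow (NeZero.ne N) hN]
  simp only [injective_stdAddChar.eq_iff' (AddChar.map_zero_eq_one _)]

theorem sum_periodicBernoulliOne_mul_mul_stdAddChar {u v : ZMod N} (huv : u * v = 1)
    (b : ZMod N) :
    ∑ a, periodicBernoulliOne (u * a) * stdAddChar (b * a) =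
      if b * v = 0 then -1 / 2 else 1 / (stdAddChar (b * v) - 1) := by
  rw [← sum_periodicBernoulliOne_mul_stdAddChar]
  refine Fintype.sum_bijective _ (Units.mkOfMulEqOne u v huv).mulLeft_bijective _ _ fun a ↦ ?_
  rw [Units.val_mkOfMulEqOne, mul_assoc, ← mul_assoc v, mul_comm v, huv, one_mul]

end ZMod

theorem Complex.one_div_exp_sub_one_add_half {x : ℂ} (hx : exp (2 * I * x) ≠ 1) :
    1 / (exp (2 * I * x) - 1) + 1 / 2 = -I / 2 * cot x := by
  have h₁ : exp (2 * I * x) - 1 ≠ 0 := sub_ne_zero.2 hx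
  have h₂ : 1 - exp (2 * I * x) ≠ 0 := sub_ne_zero.2 hx.symm
  rw [cot_eq_exp_ratio]
  field_simp
  ring

open ZMod in
theorem stmt8_general (N : ℕ) (hN : 2 ≤ N) (z : ℤ)
    (θ : ℤ) (z' : ℤ) (hz' : z * z' ≡ 1 [ZMOD (N : ℤ)]) :
    (1 / (N : ℂ)) * ∑ k ∈ Finset.Icc 1 (N - 1),
        ((Int.fract ((z : ℝ) * k / N) - 1 / 2 : ℝ) : ℂ) *
          Complex.exp (2 * (π : ℂ) * Complex.I * θ * k / N)
      = if (N : ℤ) ∣ θ then 0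
        else (-Complex.I / (2 * N)) * ((Real.cot (π * z' * θ / N) : ℝ) : ℂ) := by
  have : NeZero N := ⟨by omega⟩
  have hzz' : (z : ZMod N) * z' = 1 := by
    exact_mod_cast (ZMod.intCast_eq_intCast_iff _ _ N).2 hz'
  have hterm (k : ℕ) : ((Int.fract ((z : ℝ) * k / N) - 1 / 2 : ℝ) : ℂ) *
      Complex.exp (2 * (π : ℂ) * Complex.I * θ * k / N) =
        periodicBernoulliOne ((z * k : ℤ) : ZMod N) * stdAddChar ((θ * k : ℤ) : ZMod N) := by
    rw [← ofReal_fract_sub_half, stdAddChar_coe]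
    push_cast
    ring_nf
  have hdvd : (θ * z' : ZMod N) = 0 ↔ (N : ℤ) ∣ θ := by
    rw [(IsUnit.of_mul_eq_one_right _ hzz').mul_left_eq_zero, intCast_zmod_eq_zero_iff_dvd]
  have hexp :
      stdAddChar (θ * z' : ZMod N) = Complex.exp (2 * Complex.I * (π * z' * θ / N : ℝ)) := by
    rw [← Int.cast_mul, stdAddChar_coe]
    push_cast
    ring_nf
  simp_rw [hterm, Int.cast_mul, Int.cast_natCast]
  rw [sum_Icc_one_natCast fun a ↦
      periodicBernoulliOne ((z : ZMod N) * a) * stdAddChar ((θ : ZMod N) * a),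
    sum_periodicBernoulliOne_mul_mul_stdAddChar hzz', mul_zero, mul_zero,
    AddChar.map_zero_eq_one, mul_one, periodicBernoulliOne_zero, neg_div, sub_neg_eq_add]
  by_cases hθ : (N : ℤ) ∣ θ
  · simp [hdvd.2 hθ, hθ]
  have hc : stdAddChar (θ * z' : ZMod N) ≠ 1 := by
    rw [← AddChar.map_zero_eq_one (stdAddChar (N := N)), injective_stdAddChar.ne_iff]
    exact mt hdvd.1 hθ
  rw [if_neg (mt hdvd.1 hθ), if_neg hθ, hexp, Complex.one_div_exp_sub_one_add_half (hexp ▸ hc),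
    Complex.ofReal_cot]
  ring

/-- Let `N ≥ 2`, `z ∈ ℤ` with `gcd(z, N) = 1`, `θ ∈ ℤ`, and `z' ∈ ℤ` with
`z z' ≡ 1 (mod N)`. Then `(1/N) ∑_{k=1}^{N−1} B₁({zk/N}) exp(2πiθk/N)` equals `0` if
`θ ≡ 0 (mod N)`, and equals `(−i/(2N)) cot(πz'θ/N)` otherwise. -/
theorem stmt8 (N : ℕ) (hN : 2 ≤ N) (z : ℤ) (hz : Int.gcd z N = 1)
    (θ : ℤ) (z' : ℤ) (hz' : z * z' ≡ 1 [ZMOD (N : ℤ)]) :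
    (1 / (N : ℂ)) * ∑ k ∈ Finset.Icc 1 (N - 1),
        ((Int.fract ((z : ℝ) * k / N) - 1 / 2 : ℝ) : ℂ) *
          Complex.exp (2 * (π : ℂ) * Complex.I * θ * k / N)
      = if (N : ℤ) ∣ θ then 0
        else (-Complex.I / (2 * N)) * ((Real.cot (π * z' * θ / N) : ℝ) : ℂ) :=
  stmt8_general N hN z θ z' hz'
end

section
/- Let N ≥ 3 be a prime. Then (1/(N−1)) ∑_{w=1}^{N−1} (1/N) ∑_{h=1}^{N−1} |cot(π h w/N)|/h ≤ (H_{N−1}/N) · (6/π) · log N, where H_{N−1} = ∑_{h=1}^{N−1} 1/h. -/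
/-!
For `h` prime to `N`, the map `w ↦ h w mod N` permutes the residues `1, …, N - 1`, and
`|cot (π x / N)|` has period `N` in `x`; so the inner sum over `w` does not depend on `h`, and the
double sum factors as `C · H` with `C = ∑ₖ |cot (π k / N)|`. The bound
`|cot x| ≤ 1 / x + 1 / (π - x)` on `(0, π)` gives `C ≤ (2N / π) H`, and
`H ≤ 1 + log N ≤ 2 log N`. What remains is `4N ≤ 6 (N - 1)`, i.e. `N ≥ 3`.
-/

open Real Finset

namespace Real

lemma cot_periodic : Function.Periodic cot π := by
  intro x
  rw [cot_eq_cos_div_sin, cot_eq_cos_div_sin, sin_add_pi, cos_add_pi, neg_div_neg_eq]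

lemma cot_pi_sub (x : ℝ) : cot (π - x) = -cot x := by
  rw [cot_eq_cos_div_sin, cot_eq_cos_div_sin, cos_pi_sub, sin_pi_sub, neg_div]

lemma abs_cot_le_one_div {x : ℝ} (hx0 : 0 < x) (hx : x ≤ π / 2) : |cot x| ≤ 1 / x := by
  rcases hx.lt_or_eq with hx | rfl
  · have hsin : 0 < sin x := sin_pos_of_pos_of_lt_pi hx0 (by linarith [pi_pos])
    have hcos : 0 < cos x := cos_pos_of_mem_Ioo ⟨by linarith [pi_pos], hx⟩
    have htan : x * cos x < sin x := by
      have := lt_tan hx0 hx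
      rwa [tan_eq_sin_div_cos, lt_div_iff₀ hcos] at this
    rw [cot_eq_cos_div_sin, abs_of_nonneg (by positivity), div_le_div_iff₀ hsin hx0]
    linarith
  · rw [cot_eq_cos_div_sin, cos_pi_div_two, zero_div, abs_zero]
    positivity

lemma abs_cot_le_one_div_add_one_div {x : ℝ} (hx0 : 0 < x) (hxπ : x < π) :
    |cot x| ≤ 1 / x + 1 / (π - x) := by
  have h₁ : 0 < 1 / x := by positivity
  have h₂ : 0 < 1 / (π - x) := one_div_pos.mpr (by linarith)
  rcases le_or_gt x (π / 2) with hx | hx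
  · linarith [abs_cot_le_one_div hx0 hx]
  · have := abs_cot_le_one_div (x := π - x) (by linarith) (by linarith)
    rw [cot_pi_sub, abs_neg] at this
    linarith

end Real

lemma Function.Periodic.sum_Icc_comp_mul {M : Type*} [AddCommMonoid M] {f : ℕ → M} {N h : ℕ}
    (hf : Function.Periodic f N) (hh : N.Coprime h) :
    ∑ w ∈ Icc 1 (N - 1), f (h * w) = ∑ k ∈ Icc 1 (N - 1), f k := by
  have hmaps : ∀ w ∈ Icc 1 (N - 1), h * w % N ∈ Icc 1 (N - 1) := by
    intro w hw
    rw [mem_Icc] at hw ⊢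
    have hne : h * w % N ≠ 0 := fun h0 ↦ by
      have := Nat.le_of_dvd (by omega) (hh.dvd_of_dvd_mul_left (Nat.dvd_of_mod_eq_zero h0))
      omega
    have := Nat.mod_lt (h * w) (by omega : 0 < N)
    omega
  have hinj : Set.InjOn (fun w ↦ h * w % N) (Icc 1 (N - 1)) := by
    intro w₁ hw₁ w₂ hw₂ heq
    rw [coe_Icc, Set.mem_Icc] at hw₁ hw₂
    exact (Nat.ModEq.cancel_left_of_coprime hh heq).eq_of_lt_of_lt (by omega) (by omega)
  have himage : (Icc 1 (N - 1)).image (fun w ↦ h * w % N) = Icc 1 (N - 1) :=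
    eq_of_subset_of_card_le (image_subset_iff.mpr hmaps) (card_image_of_injOn hinj).ge
  calc ∑ w ∈ Icc 1 (N - 1), f (h * w)
      = ∑ w ∈ Icc 1 (N - 1), f (h * w % N) := by simp only [hf.map_mod_nat]
    _ = ∑ k ∈ Icc 1 (N - 1), f k := by rw [← sum_image hinj, himage]

lemma sum_Icc_one_sub_reflect {M : Type*} [AddCommMonoid M] (f : ℕ → M) (N : ℕ) :
    ∑ k ∈ Icc 1 (N - 1), f (N - k) = ∑ k ∈ Icc 1 (N - 1), f k := by
  refine sum_nbij' (N - ·) (N - ·) ?_ ?_ ?_ ?_ fun _ _ ↦ rfl <;>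
    · intro k hk
      simp only [mem_Icc] at hk ⊢
      omega

lemma sum_Icc_abs_cot_le (N : ℕ) :
    ∑ k ∈ Icc 1 (N - 1), |cot (π * k / N)|
      ≤ 2 * N / π * ∑ k ∈ Icc 1 (N - 1), (1 : ℝ) / k := by
  have hterm : ∀ k ∈ Icc 1 (N - 1),
      |cot (π * k / N)| ≤ N / π * (1 / k) + N / π * (1 / ((N - k : ℕ) : ℝ)) := by
    intro k hk
    rw [mem_Icc] at hk
    have hk0 : (0 : ℝ) < k := by exact_mod_cast hk.1
    have hkN : (k : ℝ) < N := by exact_mod_cast (by omega : k < N)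
    have hNk : ((N - k : ℕ) : ℝ) = N - k := Nat.cast_sub (by omega)
    have hN0 : (0 : ℝ) < N := hk0.trans hkN
    have hbound := abs_cot_le_one_div_add_one_div (x := π * k / N) (by positivity)
      (by rw [div_lt_iff₀ hN0]; nlinarith [pi_pos])
    convert hbound using 2
    · field_simp
    · rw [hNk, show π - π * k / N = π * (N - k) / N by field_simp]
      field_simp
  calc ∑ k ∈ Icc 1 (N - 1), |cot (π * k / N)|
      ≤ ∑ k ∈ Icc 1 (N - 1), (N / π * (1 / k) + N / π * (1 / ((N - k : ℕ) : ℝ))) :=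
        sum_le_sum hterm
    _ = 2 * N / π * ∑ k ∈ Icc 1 (N - 1), (1 : ℝ) / k := by
        rw [sum_add_distrib, ← mul_sum, ← mul_sum,
          sum_Icc_one_sub_reflect (fun k : ℕ ↦ (1 : ℝ) / k)]
        ring

lemma sum_Icc_one_div_le_two_mul_log {N : ℕ} (hN : 3 ≤ N) :
    ∑ k ∈ Icc 1 (N - 1), (1 : ℝ) / k ≤ 2 * log N := by
  have hN0 : (0 : ℝ) < N := by positivity
  have hlog : 1 ≤ log N := by
    rw [le_log_iff_exp_le hN0]
    have : (3 : ℝ) ≤ N := by exact_mod_cast hN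
    linarith [exp_one_lt_d9]
  have hharm : ∑ k ∈ Icc 1 (N - 1), (1 : ℝ) / k = harmonic (N - 1) := by
    simp [harmonic_eq_sum_Icc]
  have hlog_mono : log ((N - 1 : ℕ) : ℝ) ≤ log N :=
    log_le_log (by exact_mod_cast (by omega : 0 < N - 1)) (by exact_mod_cast N.sub_le 1)
  linarith [harmonic_le_one_add_log (N - 1)]

lemma periodic_abs_cot_pi_mul_div (N : ℕ) :
    Function.Periodic (fun k : ℕ ↦ |cot (π * k / N)|) N := by
  rcases eq_or_ne N 0 with rfl | hN
  · simp
  intro k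
  simp only [Nat.cast_add, mul_add, add_div, mul_div_cancel_right₀ π (Nat.cast_ne_zero.mpr hN),
    cot_periodic (π * k / N)]

lemma sum_Icc_sum_Icc_abs_cot_div {N : ℕ} (hp : N.Prime) :
    ∑ w ∈ Icc 1 (N - 1), ∑ h ∈ Icc 1 (N - 1), |cot (π * h * w / N)| / (h : ℝ)
      = (∑ k ∈ Icc 1 (N - 1), |cot (π * k / N)|) * ∑ h ∈ Icc 1 (N - 1), (1 : ℝ) / h := by
  rw [sum_comm, mul_sum]
  refine sum_congr rfl fun h hh ↦ ?_
  have hcop : N.Coprime h := by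
    rw [mem_Icc] at hh
    exact Nat.coprime_of_lt_prime (by omega) (by omega) hp
  rw [← sum_div, ← (periodic_abs_cot_pi_mul_div N).sum_Icc_comp_mul hcop, mul_one_div]
  push_cast
  simp only [mul_assoc]

/-- Let `N ≥ 3` be a prime. Then
`(1/(N−1)) ∑_{w=1}^{N−1} (1/N) ∑_{h=1}^{N−1} |cot(πhw/N)|/h ≤ (H_{N−1}/N)·(6/π)·log N`,
where `H_{N−1} = ∑_{h=1}^{N−1} 1/h`. -/
theorem stmt13 (N : ℕ) (hp : N.Prime) (hN : 3 ≤ N) :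
    (1 / ((N : ℝ) - 1)) * ∑ w ∈ Finset.Icc 1 (N - 1), (1 / (N : ℝ)) *
        ∑ h ∈ Finset.Icc 1 (N - 1), |Real.cot (π * h * w / N)| / (h : ℝ)
      ≤ ((∑ h ∈ Finset.Icc 1 (N - 1), (1 : ℝ) / h) / N) * (6 / π) * Real.log N := by
  rw [← mul_sum, sum_Icc_sum_Icc_abs_cot_div hp]
  set H := ∑ h ∈ Icc 1 (N - 1), (1 : ℝ) / h
  set C := ∑ k ∈ Icc 1 (N - 1), |cot (π * k / N)|
  have hN3 : (3 : ℝ) ≤ N := by exact_mod_cast hN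
  have hlog : 0 ≤ log N := log_nonneg (by linarith)
  have hC : C / (N - 1) ≤ 6 / π * log N := by
    rw [div_le_iff₀ (by linarith)]
    calc C ≤ 2 * N / π * H := sum_Icc_abs_cot_le N
      _ ≤ 2 * N / π * (2 * log N) := by gcongr; exact sum_Icc_one_div_le_two_mul_log hN
      _ = 4 * N / π * log N := by ring
      _ ≤ 6 * (N - 1) / π * log N := by gcongr ?_ / π * log N; linarith
      _ = 6 / π * log N * (N - 1) := by ring
  have hH : 0 ≤ H := sum_nonneg fun h _ ↦ by positivity
  calc 1 / ((N : ℝ) - 1) * (1 / N * (C * H)) = H / N * (C / (N - 1)) := by ring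
    _ ≤ H / N * (6 / π * log N) := by gcongr
    _ = H / N * (6 / π) * log N := by ring
end
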